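/- arXiv:1207.4924 — 3 statements merged into one kernel-verified Lean document; each statement's English description precedes it below -/
import Mathlib

section
/- Let Y be a separable metric space. Then any sequence of lower semicontinuous functions f_h : Y → [-∞,+∞] admits a Γ-convergent subsequence. -/
/-! Enumerate a countable basis `(u i)` of `Y`. Since `[-∞, +∞]^ℕ` is compact and metrizable, a
subsequence makes every `k ↦ inf_{u i} f_k` converge, to `L i` say. The Γ-limit is then
`g y = sup {L i | y ∈ u i}`: the liminf inequality holds because a sequence converging to `y`
eventually enters every basic neighbourhood of `y`, and a recovery sequence is extracted by a
diagonal argument from near-minimisers of `f_k` on ever smaller basic neighbourhoods of `y`. -/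

open Filter Topology

/-- Γ-convergence of a sequence of extended-real-valued functions on a metric space. -/
def GammaConvergesTo {Y : Type*} [MetricSpace Y] (f : ℕ → Y → EReal) (g : Y → EReal) : Prop :=
  (∀ y : Y, ∀ yh : ℕ → Y, Tendsto yh atTop (𝓝 y) →
      g y ≤ Filter.liminf (fun h => f h (yh h)) atTop) ∧
  (∀ y : Y, ∃ yh : ℕ → Y, Tendsto yh atTop (𝓝 y) ∧
      Filter.limsup (fun h => f h (yh h)) atTop ≤ g y)

open TopologicalSpace Set

theorem Filter.exists_seq_tendsto_of_eventually_inter_nonempty {α : Type*} {F : Filter α}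
    [F.IsCountablyGenerated] {E : ℕ → Set α}
    (h : ∀ W ∈ F, ∀ᶠ k in atTop, (E k ∩ W).Nonempty) :
    ∃ x : ℕ → α, Tendsto x atTop F ∧ ∀ᶠ k in atTop, x k ∈ E k := by
  classical
  obtain ⟨W, hW⟩ := F.exists_antitone_basis
  have hev (m : ℕ) : ∀ᶠ k in atTop, (E k ∩ W m).Nonempty := h _ (hW.mem m)
  obtain ⟨-, x₀, -⟩ := (hev 0).exists
  have : Nonempty α := ⟨x₀⟩
  let M : ℕ → ℕ := fun k => Nat.findGreatest (fun m => (E k ∩ W m).Nonempty) k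
  let x : ℕ → α := fun k => Classical.epsilon (· ∈ E k ∩ W (M k))
  have hx (k m : ℕ) (hmk : m ≤ k) (hm : (E k ∩ W m).Nonempty) : x k ∈ E k ∩ W (M k) :=
    Classical.epsilon_spec (Nat.findGreatest_spec (P := fun m => (E k ∩ W m).Nonempty) hmk hm)
  refine ⟨x, hW.tendsto_right_iff.2 fun m _ => ?_, ?_⟩
  · filter_upwards [hev m, eventually_ge_atTop m] with k hm hmk
    exact hW.antitone (Nat.le_findGreatest hmk hm) (hx k m hmk hm).2
  · filter_upwards [hev 0] with k h0
    exact (hx k 0 k.zero_le h0).1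

section GammaLimit

variable {Y ι β : Type*} [TopologicalSpace Y] [CompleteLinearOrder β] {u : ι → Set Y}
  {f : ℕ → Y → β}

theorem exists_tendsto_limsup_le_of_eventually_exists_lt [TopologicalSpace β] [OrderTopology β]
    [DenselyOrdered β] [FirstCountableTopology β] {y : Y} [(𝓝 y).IsCountablyGenerated] {a : β}
    (h : ∀ U ∈ 𝓝 y, ∀ b > a, ∀ᶠ k in atTop, ∃ z ∈ U, f k z < b) :
    ∃ yh : ℕ → Y, Tendsto yh atTop (𝓝 y) ∧ limsup (fun k => f k (yh k)) atTop ≤ a := by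
  rcases eq_or_ne a ⊤ with rfl | ha
  · exact ⟨fun _ => y, tendsto_const_nhds, le_top⟩
  obtain ⟨b, -, hba, hb⟩ := exists_seq_strictAnti_tendsto' (lt_top_iff_ne_top.2 ha)
  obtain ⟨x, hx, hxf⟩ := exists_seq_tendsto_of_eventually_inter_nonempty
    (F := 𝓝 y ×ˢ atTop) (E := fun k => {p | f k p.1 < b p.2}) <| by
      intro W hW
      obtain ⟨U, hU, V, hV, hUV⟩ := mem_prod_iff.1 hW
      obtain ⟨m, hm⟩ := mem_atTop_sets.1 hV
      filter_upwards [h U hU (b m) (hba m).1] with k ⟨z, hzU, hz⟩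
      exact ⟨(z, m), hz, hUV ⟨hzU, hm m le_rfl⟩⟩
  obtain ⟨hx₁, hx₂⟩ := tendsto_prod_iff'.1 hx
  refine ⟨fun k => (x k).1, hx₁, ?_⟩
  calc limsup (fun k => f k (x k).1) atTop ≤ limsup (fun k => b (x k).2) atTop :=
        limsup_le_limsup (hxf.mono fun _ hk => hk.le)
    _ = a := (hb.comp hx₂).limsup_eq

theorem lowerSemicontinuous_iSup_mem (hu : ∀ i, IsOpen (u i)) (L : ι → β) :
    LowerSemicontinuous fun y => ⨆ i, ⨆ (_ : y ∈ u i), L i := by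
  intro y c hc
  obtain ⟨i, hyi, hci⟩ := lt_biSup_iff.1 hc
  filter_upwards [(hu i).mem_nhds hyi] with z hz
  exact hci.trans_le (le_biSup L hz)

theorem iSup_mem_le_liminf {L : ι → β} (hu : ∀ i, IsOpen (u i))
    (hL : ∀ i, L i ≤ liminf (fun k => ⨅ z ∈ u i, f k z) atTop) {y : Y} {yh : ℕ → Y}
    (hyh : Tendsto yh atTop (𝓝 y)) :
    ⨆ i, ⨆ (_ : y ∈ u i), L i ≤ liminf (fun k => f k (yh k)) atTop :=
  iSup₂_le fun i hyi => (hL i).trans <| liminf_le_liminf <|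
    (hyh.eventually ((hu i).mem_nhds hyi)).mono fun _ hk => biInf_le _ hk

theorem exists_tendsto_limsup_le_iSup_mem [TopologicalSpace β] [OrderTopology β]
    [DenselyOrdered β] [FirstCountableTopology β] [FirstCountableTopology Y] {L : ι → β}
    (hB : IsTopologicalBasis (range u))
    (hL : ∀ i, limsup (fun k => ⨅ z ∈ u i, f k z) atTop ≤ L i) (y : Y) :
    ∃ yh : ℕ → Y, Tendsto yh atTop (𝓝 y) ∧
      limsup (fun k => f k (yh k)) atTop ≤ ⨆ i, ⨆ (_ : y ∈ u i), L i := by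
  refine exists_tendsto_limsup_le_of_eventually_exists_lt fun U hU b hb => ?_
  obtain ⟨_, ⟨i, rfl⟩, hyi, hiU⟩ := hB.mem_nhds_iff.1 hU
  have hlt : limsup (fun k => ⨅ z ∈ u i, f k z) atTop < b :=
    (hL i).trans_lt ((le_biSup L hyi).trans_lt hb)
  filter_upwards [eventually_lt_of_limsup_lt hlt] with k hk
  obtain ⟨z, hz, hzb⟩ := lt_biInf_iff.1 hk
  exact ⟨z, hiU hz, hzb⟩

end GammaLimit

theorem gammaConvergesTo_iSup_mem {Y ι : Type*} [MetricSpace Y] {u : ι → Set Y}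
    {f : ℕ → Y → EReal} {L : ι → EReal} (hB : IsTopologicalBasis (range u))
    (hL : ∀ i, Tendsto (fun k => ⨅ z ∈ u i, f k z) atTop (𝓝 (L i))) :
    GammaConvergesTo f fun y => ⨆ i, ⨆ (_ : y ∈ u i), L i :=
  ⟨fun _ _ => iSup_mem_le_liminf (fun i => hB.isOpen ⟨i, rfl⟩) fun i => (hL i).liminf_eq.ge,
    exists_tendsto_limsup_le_iSup_mem hB fun i => (hL i).limsup_eq.le⟩

theorem stmt1_general {Y : Type*} [MetricSpace Y] [TopologicalSpace.SeparableSpace Y]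
    (f : ℕ → Y → EReal) :
    ∃ φ : ℕ → ℕ, StrictMono φ ∧ ∃ g : Y → EReal, LowerSemicontinuous g ∧
      GammaConvergesTo (fun k => f (φ k)) g := by
  obtain ⟨B, hBc, -, hB⟩ := exists_countable_basis Y
  have : Countable B := hBc.to_subtype
  obtain ⟨L, φ, hφ, hL⟩ := CompactSpace.tendsto_subseq fun k (U : B) => ⨅ z ∈ (U : Set Y), f k z
  have hB' : IsTopologicalBasis (range ((↑) : B → Set Y)) := by rwa [Subtype.range_coe]
  exact ⟨φ, hφ, _, lowerSemicontinuous_iSup_mem (fun U => hB.isOpen U.2) L,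
    gammaConvergesTo_iSup_mem hB' fun U => tendsto_pi_nhds.1 hL U⟩

/-- On a separable metric space, any sequence of lower semicontinuous functions with values
in `[-∞,+∞]` admits a Γ-convergent subsequence. -/
theorem stmt1 {Y : Type*} [MetricSpace Y] [TopologicalSpace.SeparableSpace Y]
    (f : ℕ → Y → EReal) (hlsc : ∀ h, LowerSemicontinuous (f h)) :
    ∃ φ : ℕ → ℕ, StrictMono φ ∧ ∃ g : Y → EReal, LowerSemicontinuous g ∧
      GammaConvergesTo (fun k => f (φ k)) g :=
  stmt1_general f
end

section
/- Let (X, 𝔪) be a measure space with 𝔪 finite, and let f_n, f be nonnegative measurable functions with f_n ↑ f 𝔪-a.e. and ∫ f d𝔪 < ∞. Then ∫ f_n·log f_n d𝔪 → ∫ f·log f d𝔪 (with the convention 0·log 0 = 0). -/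
/-!
Split `t log t` into its positive and negative parts. On `[0, ∞)` the positive part is
nondecreasing, so its integrals converge by monotone convergence; the negative part is bounded by
`1` (as `t - 1 ≤ t log t`), so on a finite measure space its integrals converge by dominated
convergence, to a finite limit, where subtraction in `EReal` is continuous.
-/

open MeasureTheory Filter Topology ENNReal Set

/-- The (possibly infinite) entropy-type integral `∫ g log g dm`, defined in `EReal` as the
difference of the integrals of the positive and negative parts (convention `0 log 0 = 0`). -/
noncomputable def entInt {X : Type*} [MeasurableSpace X] (m : Measure X) (g : X → ℝ) : EReal :=
  ((∫⁻ x, ENNReal.ofReal (g x * Real.log (g x)) ∂m : ℝ≥0∞) : EReal)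
    - ((∫⁻ x, ENNReal.ofReal (-(g x * Real.log (g x))) ∂m : ℝ≥0∞) : EReal)

lemma Real.monotoneOn_ofReal_mul_log :
    MonotoneOn (fun t : ℝ => ENNReal.ofReal (t * Real.log t)) (Ici 0) := by
  intro a ha b _ hab
  rcases le_or_gt (a * Real.log a) 0 with hneg | hpos
  · simp [ENNReal.ofReal_eq_zero.2 hneg]
  · have ha₁ : 1 < a := by
      by_contra! h
      exact hpos.not_ge (Real.mul_log_nonpos ha h)
    have hexp : Real.exp (-1) ≤ a := (Real.exp_le_one_iff.2 (by norm_num)).trans ha₁.le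
    exact ENNReal.ofReal_le_ofReal <|
      Real.mul_log_strictMonoOn.monotoneOn hexp (hexp.trans hab) hab

lemma Real.neg_mul_log_le_one {t : ℝ} (ht : 0 ≤ t) : -(t * Real.log t) ≤ 1 := by
  linarith [Real.self_sub_one_le_mul_log ht]

lemma EReal.tendsto_coe_ennreal_sub {α : Type*} {l : Filter α} {a b : α → ℝ≥0∞} {a₀ b₀ : ℝ≥0∞}
    (ha : Tendsto a l (𝓝 a₀)) (hb : Tendsto b l (𝓝 b₀)) (hb₀ : b₀ ≠ ⊤) :
    Tendsto (fun i => (a i : EReal) - b i) l (𝓝 ((a₀ : EReal) - b₀)) := by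
  have hneg : -(b₀ : EReal) ≠ ⊥ := by
    rwa [ne_eq, EReal.neg_eq_bot_iff, ← EReal.coe_ennreal_top, EReal.coe_ennreal_eq_coe_ennreal_iff]
  simp only [sub_eq_add_neg]
  exact (EReal.continuousAt_add (Or.inr hneg) (Or.inl (EReal.coe_ennreal_ne_bot _))).tendsto.comp
    ((EReal.tendsto_coe_ennreal.2 ha).prodMk_nhds (EReal.tendsto_coe_ennreal.2 hb).neg)

section

variable {X : Type*} [MeasurableSpace X] {m : Measure X} {f : ℕ → X → ℝ} {g : X → ℝ}

lemma tendsto_lintegral_ofReal_mul_log (hmeas : ∀ n, Measurable (f n))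
    (hnonneg : ∀ n x, 0 ≤ f n x) (hmono : ∀ᵐ x ∂m, Monotone fun n => f n x)
    (hlim : ∀ᵐ x ∂m, Tendsto (fun n => f n x) atTop (𝓝 (g x))) :
    Tendsto (fun n => ∫⁻ x, ENNReal.ofReal (f n x * Real.log (f n x)) ∂m) atTop
      (𝓝 (∫⁻ x, ENNReal.ofReal (g x * Real.log (g x)) ∂m)) := by
  refine lintegral_tendsto_of_tendsto_of_monotone
    (fun n => ((hmeas n).mul (hmeas n).log).ennreal_ofReal.aemeasurable) ?_ ?_
  · filter_upwards [hmono] with x hx i j hij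
    exact Real.monotoneOn_ofReal_mul_log (hnonneg i x) (hnonneg j x) (hx hij)
  · filter_upwards [hlim] with x hx
    exact (ENNReal.continuous_ofReal.comp Real.continuous_mul_log).continuousAt.tendsto.comp hx

variable [IsFiniteMeasure m]

lemma tendsto_lintegral_ofReal_neg_mul_log (hmeas : ∀ n, Measurable (f n))
    (hnonneg : ∀ n x, 0 ≤ f n x) (hlim : ∀ᵐ x ∂m, Tendsto (fun n => f n x) atTop (𝓝 (g x))) :
    Tendsto (fun n => ∫⁻ x, ENNReal.ofReal (-(f n x * Real.log (f n x))) ∂m) atTop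
      (𝓝 (∫⁻ x, ENNReal.ofReal (-(g x * Real.log (g x))) ∂m)) := by
  refine tendsto_lintegral_of_dominated_convergence (fun _ => 1)
    (fun n => ((hmeas n).mul (hmeas n).log).neg.ennreal_ofReal) (fun n => ?_)
    (by simp [measure_ne_top]) ?_
  · filter_upwards with x
    exact ENNReal.ofReal_le_one.2 (Real.neg_mul_log_le_one (hnonneg n x))
  · filter_upwards [hlim] with x hx
    exact (ENNReal.continuous_ofReal.comp Real.continuous_mul_log.neg).continuousAt.tendsto.comp hx

lemma lintegral_ofReal_neg_mul_log_ne_top (hg : ∀ x, 0 ≤ g x) :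
    ∫⁻ x, ENNReal.ofReal (-(g x * Real.log (g x))) ∂m ≠ ⊤ :=
  ne_top_of_le_ne_top (by simp [measure_ne_top] : ∫⁻ _, (1 : ℝ≥0∞) ∂m ≠ ⊤) <|
    lintegral_mono fun x => ENNReal.ofReal_le_one.2 (Real.neg_mul_log_le_one (hg x))

end

theorem stmt5_general {X : Type*} [MeasurableSpace X] (m : Measure X) [IsFiniteMeasure m]
    (f : ℕ → X → ℝ) (g : X → ℝ)
    (hmeas : ∀ n, Measurable (f n))
    (hnonneg : ∀ n x, 0 ≤ f n x) (hgnonneg : ∀ x, 0 ≤ g x)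
    (hmono : ∀ᵐ x ∂m, Monotone fun n => f n x)
    (hlim : ∀ᵐ x ∂m, Tendsto (fun n => f n x) atTop (𝓝 (g x))) :
    Tendsto (fun n => entInt m (f n)) atTop (𝓝 (entInt m g)) :=
  EReal.tendsto_coe_ennreal_sub (tendsto_lintegral_ofReal_mul_log hmeas hnonneg hmono hlim)
    (tendsto_lintegral_ofReal_neg_mul_log hmeas hnonneg hlim)
    (lintegral_ofReal_neg_mul_log_ne_top hgnonneg)

/-- Monotone convergence of the entropy: if `m` is finite, `f_n ↑ g` `m`-a.e. with
`f_n, g ≥ 0` and `∫ g dm < ∞`, then `∫ f_n log f_n dm → ∫ g log g dm`. -/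
theorem stmt5 {X : Type*} [MeasurableSpace X] (m : Measure X) [IsFiniteMeasure m]
    (f : ℕ → X → ℝ) (g : X → ℝ)
    (hmeas : ∀ n, Measurable (f n)) (hgmeas : Measurable g)
    (hnonneg : ∀ n x, 0 ≤ f n x) (hgnonneg : ∀ x, 0 ≤ g x)
    (hmono : ∀ᵐ x ∂m, Monotone fun n => f n x)
    (hlim : ∀ᵐ x ∂m, Tendsto (fun n => f n x) atTop (𝓝 (g x)))
    (hint : ∫⁻ x, ENNReal.ofReal (g x) ∂m < ⊤) :
    Tendsto (fun n => entInt m (f n)) atTop (𝓝 (entInt m g)) :=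
  stmt5_general m f g hmeas hnonneg hgnonneg hmono hlim
end

section
/- Let π be an optimal geodesic plan between μ₀ and μ₁ supported on a cyclically monotone set Γ ⊂ Geo(X), fix t ∈ (0,1), a bounded set L ⊂ X, and fix γ̄ ∈ Γ with γ̄_t ∈ L. Then for every γ ∈ Γ with γ_t ∈ L one has d²(γ₀,γ₁) ≤ ((1−t)² + t²)d²(γ₀,γ₁) + 2(diam L + ℓ(γ̄))d(γ₀,γ₁) + 2(diam L + ℓ(γ̄))², and consequently the length ℓ(γ) = d(γ₀,γ₁) admits an upper bound depending only on diam L, ℓ(γ̄), and t. -/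
open Set Metric

/-- `γ : ℝ → X` is a constant-speed geodesic parametrized on `[0,1]`. -/
def IsGeodesic {X : Type*} [MetricSpace X] (γ : ℝ → X) : Prop :=
  ∀ s ∈ Icc (0:ℝ) 1, ∀ r ∈ Icc (0:ℝ) 1, dist (γ s) (γ r) = |s - r| * dist (γ 0) (γ 1)

/-- A set of curves `Γ` is cyclically monotone (for the quadratic cost between the
endpoints of its curves). -/
def CyclicallyMonotone {X : Type*} [MetricSpace X] (Γ : Set (ℝ → X)) : Prop :=
  ∀ n : ℕ, ∀ σ : Fin (n + 1) → ℝ → X, (∀ i, σ i ∈ Γ) →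
    ∑ i : Fin (n + 1), dist (σ i 0) (σ i 1) ^ 2 ≤
      ∑ i : Fin (n + 1), dist (σ i 0) (σ (i + 1) 1) ^ 2

/-
Test cyclical monotonicity against the pair (γ̄, γ): it gives
`ℓ(γ̄)² + ℓ(γ)² ≤ d(γ̄₀, γ₁)² + d(γ₀, γ̄₁)²`. Passing through the time-`t` points of both
geodesics, `d(γ̄₀, γ₁) ≤ D + (1 - t) ℓ(γ)` and `d(γ₀, γ̄₁) ≤ D + t ℓ(γ)` with
`D = diam L + ℓ(γ̄)`. Since `(1 - t)² + t² = 1 - 2t(1 - t)`, the resulting inequality reads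
`t(1 - t) ℓ(γ)² ≤ D ℓ(γ) + D²`, which bounds `ℓ(γ)`.
-/

namespace IsGeodesic

variable {X : Type*} [MetricSpace X] {γ : ℝ → X} {t : ℝ}

theorem dist_zero_eq (hγ : IsGeodesic γ) (ht : t ∈ Icc (0 : ℝ) 1) :
    dist (γ 0) (γ t) = t * dist (γ 0) (γ 1) := by
  rw [hγ 0 ⟨le_rfl, zero_le_one⟩ t ht, zero_sub, abs_neg, abs_of_nonneg ht.1]

theorem dist_one_eq (hγ : IsGeodesic γ) (ht : t ∈ Icc (0 : ℝ) 1) :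
    dist (γ t) (γ 1) = (1 - t) * dist (γ 0) (γ 1) := by
  rw [hγ t ht 1 ⟨zero_le_one, le_rfl⟩, abs_sub_comm, abs_of_nonneg (sub_nonneg.2 ht.2)]

theorem dist_zero_one_le {η : ℝ → X} (hη : IsGeodesic η) (hγ : IsGeodesic γ)
    (ht : t ∈ Icc (0 : ℝ) 1) :
    dist (η 0) (γ 1) ≤ t * dist (η 0) (η 1) + dist (η t) (γ t) + (1 - t) * dist (γ 0) (γ 1) :=
  calc dist (η 0) (γ 1) ≤ dist (η 0) (η t) + dist (η t) (γ t) + dist (γ t) (γ 1) :=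
        dist_triangle4 _ _ _ _
    _ = _ := by rw [hη.dist_zero_eq ht, hγ.dist_one_eq ht]

end IsGeodesic

theorem CyclicallyMonotone.sq_add_sq_le {X : Type*} [MetricSpace X] {Γ : Set (ℝ → X)}
    (hΓ : CyclicallyMonotone Γ) {γ η : ℝ → X} (hγ : γ ∈ Γ) (hη : η ∈ Γ) :
    dist (γ 0) (γ 1) ^ 2 + dist (η 0) (η 1) ^ 2 ≤
      dist (γ 0) (η 1) ^ 2 + dist (η 0) (γ 1) ^ 2 := by
  simpa [Fin.sum_univ_two] using hΓ 1 ![γ, η] (fun i => by fin_cases i <;> assumption)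

theorem CyclicallyMonotone.sq_dist_le {X : Type*} [MetricSpace X] {Γ : Set (ℝ → X)}
    (hΓ : CyclicallyMonotone Γ) {γ η : ℝ → X} (hγ : γ ∈ Γ) (hη : η ∈ Γ)
    (hγg : IsGeodesic γ) (hηg : IsGeodesic η) {t D : ℝ} (ht : t ∈ Icc (0 : ℝ) 1)
    (hD : dist (η t) (γ t) + dist (η 0) (η 1) ≤ D) :
    dist (γ 0) (γ 1) ^ 2 ≤ ((1 - t) ^ 2 + t ^ 2) * dist (γ 0) (γ 1) ^ 2
      + 2 * D * dist (γ 0) (γ 1) + 2 * D ^ 2 := by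
  have hℓη : t * dist (η 0) (η 1) ≤ dist (η 0) (η 1) ∧
      (1 - t) * dist (η 0) (η 1) ≤ dist (η 0) (η 1) :=
    ⟨mul_le_of_le_one_left dist_nonneg ht.2,
      mul_le_of_le_one_left dist_nonneg (by linarith [ht.1])⟩
  have h₁ : dist (η 0) (γ 1) ≤ D + (1 - t) * dist (γ 0) (γ 1) := by
    linarith [hηg.dist_zero_one_le hγg ht]
  have h₂ : dist (γ 0) (η 1) ≤ D + t * dist (γ 0) (γ 1) := by
    linarith [hγg.dist_zero_one_le hηg ht, dist_comm (η t) (γ t)]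
  nlinarith [hΓ.sq_add_sq_le hη hγ, pow_le_pow_left₀ dist_nonneg h₁ 2,
    pow_le_pow_left₀ dist_nonneg h₂ 2, sq_nonneg (dist (η 0) (η 1))]

theorem le_of_mul_sq_le_mul_add_sq {c D x : ℝ} (hc : 0 < c) (hD : 0 ≤ D)
    (h : c * x ^ 2 ≤ D * x + D ^ 2) : x ≤ (1 + c⁻¹) * D := by
  by_contra! hx
  have hcx : D * (c + 1) < c * x := by
    calc D * (c + 1) = c * ((1 + c⁻¹) * D) := by field_simp
      _ < c * x := mul_lt_mul_of_pos_left hx hc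
  have hx₀ : 0 < x := by nlinarith
  nlinarith [mul_lt_mul_of_pos_left hcx hx₀, mul_le_mul_of_nonneg_left hcx.le hD]

/-- Localization in transport distance: if `Γ` is a cyclically monotone set of geodesics,
`t ∈ (0,1)`, `L` is bounded and `γ̄ ∈ Γ` passes through `L` at time `t`, then every
`γ ∈ Γ` with `γ_t ∈ L` satisfies
`d²(γ₀,γ₁) ≤ ((1−t)²+t²) d²(γ₀,γ₁) + 2(diam L + ℓ(γ̄)) d(γ₀,γ₁) + 2(diam L + ℓ(γ̄))²`,
and consequently the lengths `ℓ(γ) = d(γ₀,γ₁)` of such curves are uniformly bounded. -/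
theorem stmt12 {X : Type*} [MetricSpace X]
    (Γ : Set (ℝ → X)) (hgeo : ∀ γ ∈ Γ, IsGeodesic γ) (hcm : CyclicallyMonotone Γ)
    (t : ℝ) (ht : t ∈ Ioo (0:ℝ) 1)
    (L : Set X) (hL : Bornology.IsBounded L)
    (γb : ℝ → X) (hγb : γb ∈ Γ) (hγbt : γb t ∈ L) :
    (∀ γ ∈ Γ, γ t ∈ L →
      dist (γ 0) (γ 1) ^ 2 ≤ ((1 - t) ^ 2 + t ^ 2) * dist (γ 0) (γ 1) ^ 2
        + 2 * (diam L + dist (γb 0) (γb 1)) * dist (γ 0) (γ 1)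
        + 2 * (diam L + dist (γb 0) (γb 1)) ^ 2) ∧
    ∃ B : ℝ, ∀ γ ∈ Γ, γ t ∈ L → dist (γ 0) (γ 1) ≤ B := by
  set D := diam L + dist (γb 0) (γb 1)
  have key : ∀ γ ∈ Γ, γ t ∈ L →
      dist (γ 0) (γ 1) ^ 2 ≤ ((1 - t) ^ 2 + t ^ 2) * dist (γ 0) (γ 1) ^ 2
        + 2 * D * dist (γ 0) (γ 1) + 2 * D ^ 2 := fun γ hγ hγt =>
    hcm.sq_dist_le hγ hγb (hgeo γ hγ) (hgeo γb hγb) (Ioo_subset_Icc_self ht)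
      (by grw [dist_le_diam_of_mem hL hγbt hγt])
  refine ⟨key, (1 + (t * (1 - t))⁻¹) * D, fun γ hγ hγt => ?_⟩
  refine le_of_mul_sq_le_mul_add_sq (mul_pos ht.1 (sub_pos.2 ht.2))
    (add_nonneg diam_nonneg dist_nonneg) ?_
  linarith [key γ hγ hγt]
end
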